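/- arXiv:1906.09367 — 4 statements merged into one kernel-verified Lean document; each statement's English description precedes it below -/
import Mathlib

section
/- Let n = 12m with m ≡ 0 (mod 4). Then gcd(3m−1, 12m) = 1, and the map a ↦ a^(3m−1), b ↦ b·a^(6m) extends to an automorphism β of the dihedral group H = ⟨a, b | a^n = b² = 1, bab = a⁻¹⟩ satisfying β({b, ba}) = {b·a^(6m), b·a^(−3m−1)} and β({b·a^(6m), b·a^(3m−1)}) = {b, ba}. -/
open DihedralGroup

/-- A general automorphism of the dihedral group: `r i ↦ r (k*i)`,
`sr i ↦ sr (k*i + s)`, with inverse given by `k', s'`. -/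
def dihAut {n : ℕ} (k k' s s' : ZMod n) (hkk' : k * k' = 1) (hk'k : k' * k = 1)
    (h1 : k' * s + s' = 0) (h2 : k * s' + s = 0) :
    DihedralGroup n ≃* DihedralGroup n where
  toFun x := match x with
    | r i => r (k * i)
    | sr i => sr (k * i + s)
  invFun x := match x with
    | r i => r (k' * i)
    | sr i => sr (k' * i + s')
  left_inv x := by
    rcases x with i | i
    · show r (k' * (k * i)) = r i
      congr 1
      calc k' * (k * i) = (k' * k) * i := by ring
        _ = i := by rw [hk'k, one_mul]
    · show sr (k' * (k * i + s) + s') = sr i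
      congr 1
      calc k' * (k * i + s) + s' = (k' * k) * i + (k' * s + s') := by ring
        _ = i := by rw [hk'k, h1, one_mul, add_zero]
  right_inv x := by
    rcases x with i | i
    · show r (k * (k' * i)) = r i
      congr 1
      calc k * (k' * i) = (k * k') * i := by ring
        _ = i := by rw [hkk', one_mul]
    · show sr (k * (k' * i + s') + s) = sr i
      congr 1
      calc k * (k' * i + s') + s = (k * k') * i + (k * s' + s) := by ring
        _ = i := by rw [hkk', h2, one_mul, add_zero]
  map_mul' x y := by
    rcases x with i | i <;> rcases y with j | j <;>
      simp only [r_mul_r, r_mul_sr, sr_mul_r, sr_mul_sr] <;> congr 1 <;> ring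

@[simp] theorem dihAut_r {n : ℕ} (k k' s s' : ZMod n) (hkk' hk'k h1 h2) (i : ZMod n) :
    dihAut k k' s s' hkk' hk'k h1 h2 (r i) = r (k * i) := rfl

@[simp] theorem dihAut_sr {n : ℕ} (k k' s s' : ZMod n) (hkk' hk'k h1 h2) (i : ZMod n) :
    dihAut k k' s s' hkk' hk'k h1 h2 (sr i) = sr (k * i + s) := rfl

/-- For n = 12m with 4 | m, gcd(3m−1, 12m) = 1 and the map
a ↦ a^(3m−1), b ↦ b·a^(6m) extends to an automorphism β of D_{2n} which swaps
the sets {b, ba} and {b·a^(6m), b·a^(3m−1)} as stated. -/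
theorem stmt7 (m n : ℕ) (h4 : 4 ∣ m) (hm : 0 < m) (hn : n = 12 * m) :
    Nat.gcd (3 * m - 1) (12 * m) = 1 ∧
    ∃ β : DihedralGroup n ≃* DihedralGroup n,
      β (r 1) = r (((3 * m - 1 : ℕ) : ZMod n)) ∧
      β (sr 0) = sr (((6 * m : ℕ) : ZMod n)) ∧
      (⇑β) '' ({sr 0, sr 1} : Set (DihedralGroup n)) =
        {sr (((6 * m : ℕ) : ZMod n)), sr (-((3 * m : ℕ) : ZMod n) - 1)} ∧
      (⇑β) '' ({sr (((6 * m : ℕ) : ZMod n)), sr (((3 * m - 1 : ℕ) : ZMod n))} :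
          Set (DihedralGroup n)) = {sr 0, sr 1} := by
  obtain ⟨t, rfl⟩ := h4
  have ht : 0 < t := by omega
  have h48 : (48 : ZMod n) * ((t : ℕ) : ZMod n) = 0 := by
    have h0 : ((12 * (4 * t) : ℕ) : ZMod n) = 0 := by
      rw [← hn]; exact ZMod.natCast_self n
    push_cast at h0
    linear_combination h0
  set T : ZMod n := ((t : ℕ) : ZMod n) with hT
  have hk : (((3 * (4 * t) - 1 : ℕ)) : ZMod n) = 12 * T - 1 := by
    rw [Nat.cast_sub (by omega)]; push_cast [hT]; ring
  have hs : (((6 * (4 * t) : ℕ)) : ZMod n) = 24 * T := by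
    push_cast [hT]; ring
  have h3m : (((3 * (4 * t) : ℕ)) : ZMod n) = 12 * T := by
    push_cast [hT]; ring
  constructor
  · have e : 12 * (4 * t) = 4 + (3 * (4 * t) - 1) * 4 := by omega
    rw [e, Nat.gcd_add_mul_left_right]
    have e2 : (3 * (4 * t) - 1) % 4 = 3 := by omega
    rw [Nat.gcd_comm, Nat.gcd_rec, e2]
    decide
  · have hkk' : (12 * T - 1) * (36 * T - 1) = 1 := by linear_combination (9 * T - 1) * h48
    have hk'k : (36 * T - 1) * (12 * T - 1) = 1 := by linear_combination (9 * T - 1) * h48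
    have h1 : (36 * T - 1) * (24 * T) + 24 * T = 0 := by linear_combination 18 * T * h48
    have h2 : (12 * T - 1) * (24 * T) + 24 * T = 0 := by linear_combination 6 * T * h48
    refine ⟨dihAut (12 * T - 1) (36 * T - 1) (24 * T) (24 * T) hkk' hk'k h1 h2, ?_, ?_, ?_, ?_⟩
    · rw [dihAut_r, hk, mul_one]
    · rw [dihAut_sr, hs, mul_zero, zero_add]
    · rw [Set.image_insert_eq, Set.image_singleton, dihAut_sr, dihAut_sr]
      rw [hs, h3m]
      have e1 : (12 * T - 1) * 0 + 24 * T = 24 * T := by ring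
      have e2 : (12 * T - 1) * 1 + 24 * T = -(12 * T) - 1 := by linear_combination h48
      rw [e1, e2]
    · rw [Set.image_insert_eq, Set.image_singleton, dihAut_sr, dihAut_sr]
      rw [hs, hk]
      have e1 : (12 * T - 1) * (24 * T) + 24 * T = 0 := by linear_combination 6 * T * h48
      have e2 : (12 * T - 1) * (12 * T - 1) + 24 * T = 1 := by linear_combination 3 * T * h48
      rw [e1, e2]
end

section
/- In the dihedral group H = ⟨a, b | a^n = b² = 1, bab = a⁻¹⟩ with n even, if S = {b, b·a^i, a^(n/2)} generates H, then either gcd(i, n) = 1, or gcd(i, n) = 2 and n/2 is odd. -/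
/-!
Reduction of indices modulo a divisor `m` of `n` is a surjection `D_n → D_m`. If `m` divides
both `i` and `n / 2`, it sends `b`, `b a^i` and `a^(n/2)` into the subgroup `{1, b}` of order `2`,
so these elements can only generate `D_n` when `m = 1`. Hence `i` is coprime to `n / 2`, and
then `gcd(i, n) = gcd(i, 2)`, which is `2` only if `i` is even, forcing `n / 2` to be odd.
-/

open DihedralGroup

namespace DihedralGroup

variable {m n : ℕ}

def reduce (h : m ∣ n) : DihedralGroup n →* DihedralGroup m where
  toFun
    | r k => r (ZMod.castHom h (ZMod m) k)
    | sr k => sr (ZMod.castHom h (ZMod m) k)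
  map_one' := by simp [-r_zero, one_def]
  map_mul' := by
    rintro (x | x) (y | y) <;> simp [r_mul_r, r_mul_sr, sr_mul_r, sr_mul_sr, map_add, map_sub]

@[simp]
theorem reduce_r (h : m ∣ n) (k : ZMod n) : reduce h (r k) = r (ZMod.castHom h (ZMod m) k) :=
  rfl

@[simp]
theorem reduce_sr (h : m ∣ n) (k : ZMod n) : reduce h (sr k) = sr (ZMod.castHom h (ZMod m) k) :=
  rfl

theorem reduce_surjective (h : m ∣ n) : Function.Surjective (reduce h) := by
  rintro (k | k) <;> obtain ⟨k, rfl⟩ := ZMod.castHom_surjective h k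
  exacts [⟨r k, rfl⟩, ⟨sr k, rfl⟩]

theorem zpowers_sr_ne_top (hm : m ≠ 1) (k : ZMod m) : Subgroup.zpowers (sr k) ≠ ⊤ := by
  intro h
  have hcard := Nat.card_zpowers (sr k)
  rw [h, Subgroup.card_top, nat_card, orderOf_sr] at hcard
  omega

theorem eq_one_of_closure_eq_top {i j : ℕ} (hmn : m ∣ n) (hi : m ∣ i) (hj : m ∣ j)
    (h : Subgroup.closure ({sr 0, sr (i : ZMod n), r (j : ZMod n)} : Set (DihedralGroup n)) = ⊤) :
    m = 1 := by
  by_contra hm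
  apply zpowers_sr_ne_top hm 0
  have himage := congrArg (Subgroup.map (reduce hmn)) h
  rw [MonoidHom.map_closure, ← MonoidHom.range_eq_map,
    MonoidHom.range_eq_top.2 (reduce_surjective hmn)] at himage
  simp only [Set.image_insert_eq, Set.image_singleton, reduce_sr, reduce_r, map_zero,
    map_natCast, (ZMod.natCast_eq_zero_iff _ _).2 hi, (ZMod.natCast_eq_zero_iff _ _).2 hj,
    r_zero, Set.insert_eq_of_mem (Set.mem_insert _ _)] at himage
  rwa [Set.pair_comm, Subgroup.closure_insert_one, ← Subgroup.zpowers_eq_closure] at himage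

end DihedralGroup

theorem Nat.gcd_two_mul_eq_one_or_of_coprime {i k : ℕ} (h : Nat.Coprime i k) :
    Nat.gcd i (2 * k) = 1 ∨ (Nat.gcd i (2 * k) = 2 ∧ Odd k) := by
  rw [Nat.Coprime.gcd_mul_right_cancel_right 2 h.symm]
  rcases (Nat.dvd_prime Nat.prime_two).1 (Nat.gcd_dvd_right i 2) with h1 | h2
  · exact .inl h1
  · refine .inr ⟨h2, Nat.odd_iff.2 (Nat.two_dvd_ne_zero.1 fun hk => ?_)⟩
    have h2i : 2 ∣ i := h2 ▸ Nat.gcd_dvd_left i 2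
    exact absurd (Nat.eq_one_of_dvd_coprimes h h2i hk) (by norm_num)

theorem stmt9_general (n : ℕ) (hn : Even n) (i : ℕ)
    (hgen : Subgroup.closure
      ({sr 0, sr ((i : ℕ) : ZMod n), r (((n / 2 : ℕ) : ZMod n))} :
        Set (DihedralGroup n)) = ⊤) :
    Nat.gcd i n = 1 ∨ (Nat.gcd i n = 2 ∧ Odd (n / 2)) := by
  have hcop : Nat.Coprime i (n / 2) :=
    eq_one_of_closure_eq_top (m := Nat.gcd i (n / 2))
      ((Nat.gcd_dvd_right _ _).trans (Nat.div_dvd_of_dvd hn.two_dvd))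
      (Nat.gcd_dvd_left _ _) (Nat.gcd_dvd_right _ _) hgen
  have := Nat.gcd_two_mul_eq_one_or_of_coprime hcop
  rwa [Nat.two_mul_div_two_of_even hn] at this

/-- In D_{2n} with n even, if S = {b, b·a^i, a^(n/2)} generates D_{2n}
then gcd(i, n) = 1, or gcd(i, n) = 2 and n/2 is odd. -/
theorem stmt9 (n : ℕ) (hn : Even n) (hn3 : 3 ≤ n) (i : ℕ)
    (hgen : Subgroup.closure
      ({sr 0, sr ((i : ℕ) : ZMod n), r (((n / 2 : ℕ) : ZMod n))} :
        Set (DihedralGroup n)) = ⊤) :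
    Nat.gcd i n = 1 ∨ (Nat.gcd i n = 2 ∧ Odd (n / 2)) :=
  stmt9_general n hn i hgen
end

section
/- The multi-cross ladder graph MCL_{4m,2} is isomorphic to the bi-Cayley graph BiCay(H, {c, ca}, {ca, ca²b}, {1}) over the group H = ⟨a, b, c | a^m = b² = c² = 1, ab = ba, cac⁻¹ = a⁻¹, cb = bc⟩, via an explicit vertex bijection. -/
open DihedralGroup

/-- The bi-Cayley graph BiCay(H, R, L, S): vertex set H × Bool, right part H × {false},
left part H × {true}; right edges, left edges and spokes as usual. -/
def biCayleyGraph (H : Type*) [Group H] (R L S : Set H) : SimpleGraph (H × Bool) :=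
  SimpleGraph.fromRel (fun p q =>
    (p.2 = false ∧ q.2 = false ∧ q.1 * p.1⁻¹ ∈ R) ∨
    (p.2 = true ∧ q.2 = true ∧ q.1 * p.1⁻¹ ∈ L) ∨
    (p.2 = false ∧ q.2 = true ∧ q.1 * p.1⁻¹ ∈ S))

/-- The multi-cross ladder graph MCL_{4m,2}: vertices x_i^{r,s} = (i, r, s),
edges {x_{2i}^{r,s}, x_{2i+1}^{r,t}} and {x_{2i+1}^{r,s}, x_{2i+2}^{s,r}}. -/
def multiCrossLadder (m : ℕ) : SimpleGraph (ZMod (2 * m) × ZMod 2 × ZMod 2) :=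
  SimpleGraph.fromRel (fun p q =>
    (∃ i : ℕ, p.1 = ((2 * i : ℕ) : ZMod (2 * m)) ∧
      q.1 = ((2 * i + 1 : ℕ) : ZMod (2 * m)) ∧ p.2.1 = q.2.1) ∨
    (∃ i : ℕ, p.1 = ((2 * i + 1 : ℕ) : ZMod (2 * m)) ∧
      q.1 = ((2 * i + 2 : ℕ) : ZMod (2 * m)) ∧ q.2.1 = p.2.2 ∧ q.2.2 = p.2.1))

/-!
Send `(aᵏ bᵉ, 0) ↦ x_{2k}^{e,e}`, `(aᵏ bᵉ, 1) ↦ x_{2k+1}^{e,e+1}`,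
`(c aᵏ bᵉ, 0) ↦ x_{2k-1}^{e,e}` and `(c aᵏ bᵉ, 1) ↦ x_{2k-2}^{e,e+1}`. In `MCL_{4m,2}` the
neighbours of `x_i^{r,s}` are `x_{i+1}^{r,t}` (both `t`) and `x_{i-1}^{s,r}` when `i` is even, and
`x_{i-1}^{r,t}`, `x_{i+1}^{s,r}` when `i` is odd; in the bi-Cayley graph the neighbours of
`(h, 0)` are `(R h, 0)` and `(h, 1)`, and those of `(h, 1)` are `(L h, 1)` and `(h, 0)`. The map
carries each neighbourhood onto the neighbourhood of the image, which makes it an isomorphism.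
-/

namespace ZMod

variable {m : ℕ}

theorem even_iff_exists_natCast [NeZero m] (x : ZMod m) :
    Even x ↔ ∃ i : ℕ, x = ((2 * i : ℕ) : ZMod m) := by
  constructor
  · rintro ⟨y, rfl⟩
    exact ⟨y.val, by push_cast [natCast_zmod_val]; ring⟩
  · rintro ⟨i, rfl⟩
    exact ⟨i, by push_cast; ring⟩

theorem even_iff_castHom_eq_zero [NeZero m] (x : ZMod (2 * m)) :
    Even x ↔ castHom (dvd_mul_right 2 m) (ZMod 2) x = 0 := by
  constructor
  · rintro ⟨y, rfl⟩
    rw [map_add, CharTwo.add_self_eq_zero]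
  · intro h
    rw [← natCast_zmod_val x, map_natCast, natCast_eq_zero_iff_even] at h
    obtain ⟨i, hi⟩ := h
    exact ⟨i, by rw [← natCast_zmod_val x, hi]; push_cast; ring⟩

theorem even_sub_one_iff [NeZero m] (x : ZMod (2 * m)) : Even (x - 1) ↔ ¬Even x := by
  simp only [even_iff_castHom_eq_zero, map_sub, map_one]
  generalize castHom (dvd_mul_right 2 m) (ZMod 2) x = y
  revert y; decide

theorem exists_eq_two_mul_and_eq_two_mul_add_one_iff [NeZero m] (x y : ZMod m) (P : Prop) :
    (∃ i : ℕ, x = ((2 * i : ℕ) : ZMod m) ∧ y = ((2 * i + 1 : ℕ) : ZMod m) ∧ P) ↔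
      Even x ∧ y = x + 1 ∧ P := by
  rw [even_iff_exists_natCast]
  constructor
  · rintro ⟨i, rfl, rfl, hP⟩
    exact ⟨⟨i, rfl⟩, by push_cast; rfl, hP⟩
  · rintro ⟨⟨i, rfl⟩, rfl, hP⟩
    exact ⟨i, rfl, by push_cast; rfl, hP⟩

theorem exists_eq_two_mul_add_one_and_eq_two_mul_add_two_iff [NeZero m] (x y : ZMod (2 * m))
    (P : Prop) :
    (∃ i : ℕ, x = ((2 * i + 1 : ℕ) : ZMod (2 * m)) ∧ y = ((2 * i + 2 : ℕ) : ZMod (2 * m)) ∧ P) ↔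
      ¬Even x ∧ y = x + 1 ∧ P := by
  have shift (i : ℕ) :
      (x = ((2 * i + 1 : ℕ) : ZMod (2 * m)) ↔ x - 1 = ((2 * i : ℕ) : ZMod (2 * m))) ∧
      (y = ((2 * i + 2 : ℕ) : ZMod (2 * m)) ↔ y - 1 = ((2 * i + 1 : ℕ) : ZMod (2 * m))) := by
    push_cast
    exact ⟨sub_eq_iff_eq_add.symm, by rw [sub_eq_iff_eq_add, add_assoc, one_add_one_eq_two]⟩
  simp_rw [shift, exists_eq_two_mul_and_eq_two_mul_add_one_iff, even_sub_one_iff, sub_add_cancel,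
    sub_eq_iff_eq_add]

variable (m) in
def double : ZMod m →+ ZMod (2 * m) :=
  lift m ⟨zmultiplesHom _ 2, by simpa [mul_comm] using natCast_self (2 * m)⟩

@[simp] theorem double_natCast (i : ℕ) : double m i = ((2 * i : ℕ) : ZMod (2 * m)) := by
  rw [← Int.cast_natCast, double, lift_coe]
  simp [mul_comm]

@[simp] theorem double_ofNat (n : ℕ) [n.AtLeastTwo] :
    double m (no_index (OfNat.ofNat n)) = ((2 * n : ℕ) : ZMod (2 * m)) :=
  double_natCast n

@[simp] theorem double_one : double m 1 = 2 := by
  simpa using double_natCast (m := m) 1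

theorem double_injective : Function.Injective (double m) := by
  rw [double, lift_injective]
  intro z hz
  simp only [zmultiplesHom_apply, zsmul_eq_mul] at hz
  rw [← Int.cast_ofNat, ← Int.cast_mul, intCast_zmod_eq_zero_iff_dvd] at hz
  rw [intCast_zmod_eq_zero_iff_dvd]
  push_cast at hz
  rw [mul_comm 2] at hz
  exact Int.dvd_of_mul_dvd_mul_right two_ne_zero hz

theorem even_double [NeZero m] (k : ZMod m) : Even (double m k) := by
  rw [← natCast_zmod_val k, double_natCast, even_iff_exists_natCast]
  exact ⟨_, rfl⟩

theorem not_even_double_add_one [NeZero m] (k : ZMod m) : ¬Even (double m k + 1) := by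
  rw [← even_sub_one_iff, add_sub_cancel_right]
  exact even_double k

theorem double_ne_double_add_one [NeZero m] (j k : ZMod m) : double m j ≠ double m k + 1 :=
  fun h ↦ not_even_double_add_one k (h ▸ even_double j)

end ZMod

open ZMod

section BiCayley

variable {H : Type*} [Group H] {R L S : Set H} {g h : H}

theorem mul_inv_mem_iff_exists_mul_eq : h * g⁻¹ ∈ S ↔ ∃ s ∈ S, s * g = h :=
  ⟨fun hs ↦ ⟨_, hs, inv_mul_cancel_right h g⟩, by rintro ⟨s, hs, rfl⟩; simpa⟩

theorem not_eq_and_mul_inv_mem_or_iff (hR : ∀ s ∈ R, s⁻¹ ∈ R) (hR1 : 1 ∉ R) :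
    ¬g = h ∧ (h * g⁻¹ ∈ R ∨ g * h⁻¹ ∈ R) ↔ h * g⁻¹ ∈ R := by
  have hsymm : g * h⁻¹ ∈ R ↔ h * g⁻¹ ∈ R :=
    ⟨fun hs ↦ by simpa using hR _ hs, fun hs ↦ by simpa using hR _ hs⟩
  rw [hsymm, or_self, and_iff_right_iff_imp]
  rintro hs rfl
  exact hR1 (by simpa using hs)

theorem biCayleyGraph_neighborSet_false (hR : ∀ s ∈ R, s⁻¹ ∈ R) (hR1 : 1 ∉ R) (g : H) :
    (biCayleyGraph H R L S).neighborSet (g, false) =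
      (fun s ↦ (s * g, false)) '' R ∪ (fun s ↦ (s * g, true)) '' S := by
  ext ⟨h, _ | _⟩ <;>
    simp only [biCayleyGraph, SimpleGraph.mem_neighborSet, SimpleGraph.fromRel_adj, ne_eq,
      Prod.mk.injEq, Bool.false_eq_true, Bool.true_eq_false, and_false, false_and, and_true,
      true_and, and_self, or_false, false_or, or_self, not_false_eq_true, Set.mem_union,
      Set.mem_image, exists_const]
  · rw [not_eq_and_mul_inv_mem_or_iff hR hR1, mul_inv_mem_iff_exists_mul_eq]
  · exact mul_inv_mem_iff_exists_mul_eq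

theorem biCayleyGraph_neighborSet_true (hL : ∀ s ∈ L, s⁻¹ ∈ L) (hL1 : 1 ∉ L) (g : H) :
    (biCayleyGraph H R L S).neighborSet (g, true) =
      (fun s ↦ (s * g, true)) '' L ∪ (fun s ↦ (s⁻¹ * g, false)) '' S := by
  ext ⟨h, _ | _⟩ <;>
    simp only [biCayleyGraph, SimpleGraph.mem_neighborSet, SimpleGraph.fromRel_adj, ne_eq,
      Prod.mk.injEq, Bool.false_eq_true, Bool.true_eq_false, and_false, false_and, and_true,
      true_and, and_self, or_false, false_or, or_self, not_false_eq_true, Set.mem_union,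
      Set.mem_image, exists_const]
  · rw [mul_inv_mem_iff_exists_mul_eq]
    refine exists_congr fun s ↦ and_congr_right fun _ ↦ ?_
    rw [inv_mul_eq_iff_eq_mul, eq_comm]
  · rw [not_eq_and_mul_inv_mem_or_iff hL hL1, mul_inv_mem_iff_exists_mul_eq]

end BiCayley

section MultiCrossLadder

variable {m : ℕ} [NeZero m]

theorem multiCrossLadder_neighborSet_of_even {x : ZMod (2 * m)} (hx : Even x) (a b : ZMod 2) :
    (multiCrossLadder m).neighborSet (x, a, b) =
      {(x + 1, a, a), (x + 1, a, a + 1), (x - 1, b, a)} := by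
  have : Fact (1 < 2 * m) := ⟨by have := NeZero.pos m; omega⟩
  ext ⟨y, s, t⟩
  simp only [SimpleGraph.mem_neighborSet, multiCrossLadder, SimpleGraph.fromRel_adj,
    exists_eq_two_mul_and_eq_two_mul_add_one_iff,
    exists_eq_two_mul_add_one_and_eq_two_mul_add_two_iff, Set.mem_insert_iff,
    Set.mem_singleton_iff, Prod.mk.injEq]
  have hone : (1 : ZMod (2 * m)) ≠ 0 := one_ne_zero
  have hx1 : ¬Even (x - 1) := by rwa [even_sub_one_iff, not_not]
  have hprev : x = y + 1 ↔ y = x - 1 := by rw [eq_comm, eq_sub_iff_add_eq]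
  have hlabel : ∀ u a : ZMod 2, u = a ∨ u = a + 1 := by decide
  rw [hprev]
  constructor
  · rintro ⟨-, (⟨-, rfl, rfl⟩ | ⟨hx', -⟩) | ⟨hy, rfl, rfl⟩ | ⟨-, rfl, rfl, rfl⟩⟩
    · rcases hlabel t a with rfl | rfl <;> simp
    · exact absurd hx hx'
    · exact absurd hy hx1
    · simp
  · rintro (⟨rfl, rfl, rfl⟩ | ⟨rfl, rfl, rfl⟩ | ⟨rfl, rfl, rfl⟩)
    · simp [hx, hone]
    · simp [hx, hone]
    · simp [hx1, hone, eq_sub_iff_add_eq]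

theorem multiCrossLadder_neighborSet_of_not_even {x : ZMod (2 * m)} (hx : ¬Even x)
    (a b : ZMod 2) :
    (multiCrossLadder m).neighborSet (x, a, b) =
      {(x - 1, a, a), (x - 1, a, a + 1), (x + 1, b, a)} := by
  have : Fact (1 < 2 * m) := ⟨by have := NeZero.pos m; omega⟩
  ext ⟨y, s, t⟩
  simp only [SimpleGraph.mem_neighborSet, multiCrossLadder, SimpleGraph.fromRel_adj,
    exists_eq_two_mul_and_eq_two_mul_add_one_iff,
    exists_eq_two_mul_add_one_and_eq_two_mul_add_two_iff, Set.mem_insert_iff,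
    Set.mem_singleton_iff, Prod.mk.injEq]
  have hone : (1 : ZMod (2 * m)) ≠ 0 := one_ne_zero
  have hx1 : Even (x - 1) := (even_sub_one_iff x).2 hx
  have hprev : x = y + 1 ↔ y = x - 1 := by rw [eq_comm, eq_sub_iff_add_eq]
  have hlabel : ∀ u a : ZMod 2, u = a ∨ u = a + 1 := by decide
  rw [hprev]
  constructor
  · rintro ⟨-, (⟨hx', -⟩ | ⟨-, rfl, rfl, rfl⟩) | ⟨-, rfl, rfl⟩ | ⟨hy, rfl, -⟩⟩
    · exact absurd hx' hx
    · simp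
    · rcases hlabel t s with rfl | rfl <;> simp
    · exact absurd hx1 hy
  · rintro (⟨rfl, rfl, rfl⟩ | ⟨rfl, rfl, rfl⟩ | ⟨rfl, rfl, rfl⟩)
    · simp [hx1, hone, eq_sub_iff_add_eq]
    · simp [hx1, hone, eq_sub_iff_add_eq]
    · simp [hx, hone]

end MultiCrossLadder

def SimpleGraph.Iso.ofImageNeighborSet {V W : Type*} {G : SimpleGraph V} {G' : SimpleGraph W}
    (e : V ≃ W) (he : ∀ v, e '' G.neighborSet v = G'.neighborSet (e v)) : G ≃g G' where
  toEquiv := e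
  map_rel_iff' {v w} := by
    rw [← SimpleGraph.mem_neighborSet, ← he, e.injective.mem_set_image, SimpleGraph.mem_neighborSet]

theorem DihedralGroup.one_ne_sr {n : ℕ} (i : ZMod n) : (1 : DihedralGroup n) ≠ sr i := nofun

section Ladder

variable {m : ℕ}

/- With `a = (r 1, 1)`, `b = (1, ofAdd 1)` and `c = (sr 0, 1)`, these are the connection sets
`{c, ca}` and `{ca, ca²b}` of the paper. -/
def ladderR (m : ℕ) : Set (DihedralGroup m × Multiplicative (ZMod 2)) :=
  {(sr 0, 1), (sr 0, 1) * (r 1, 1)}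

def ladderL (m : ℕ) : Set (DihedralGroup m × Multiplicative (ZMod 2)) :=
  {(sr 0, 1) * (r 1, 1), (sr 0, 1) * (r 1, 1) ^ 2 * (1, Multiplicative.ofAdd (1 : ZMod 2))}

theorem ladderR_eq : ladderR m = {(sr 0, 1), (sr 1, 1)} := by
  simp [ladderR]

theorem ladderL_eq : ladderL m = {(sr 1, 1), (sr 2, Multiplicative.ofAdd 1)} := by
  simp [ladderL, sq, one_add_one_eq_two]

theorem inv_mem_ladderR : ∀ s ∈ ladderR m, s⁻¹ ∈ ladderR m := by
  simp [ladderR_eq]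

theorem one_notMem_ladderR : 1 ∉ ladderR m := by
  simp [ladderR_eq, Prod.ext_iff, one_ne_sr]

theorem inv_mem_ladderL : ∀ s ∈ ladderL m, s⁻¹ ∈ ladderL m := by
  simp [ladderL_eq, ← ofAdd_neg, ZMod.neg_eq_self_mod_two]

theorem one_notMem_ladderL : 1 ∉ ladderL m := by
  simp [ladderL_eq, Prod.ext_iff, one_ne_sr]

def toLadder (m : ℕ) :
    (DihedralGroup m × Multiplicative (ZMod 2)) × Bool → ZMod (2 * m) × ZMod 2 × ZMod 2
  | ((r k, ε), false) => (double m k, ε.toAdd, ε.toAdd)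
  | ((sr k, ε), false) => (double m (k - 1) + 1, ε.toAdd, ε.toAdd)
  | ((r k, ε), true) => (double m k + 1, ε.toAdd, ε.toAdd + 1)
  | ((sr k, ε), true) => (double m (k - 1), ε.toAdd, ε.toAdd + 1)

variable [NeZero m]

theorem toLadder_injective : Function.Injective (toLadder m) := by
  rintro ⟨⟨k | k, ε⟩, _ | _⟩ ⟨⟨j | j, δ⟩, _ | _⟩ <;>
    simp +contextual [toLadder, double_ne_double_add_one, (double_ne_double_add_one _ _).symm,
      double_injective.eq_iff, -map_sub]

theorem toLadder_bijective : Function.Bijective (toLadder m) := by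
  rw [Fintype.bijective_iff_injective_and_card]
  refine ⟨toLadder_injective, ?_⟩
  simp only [Fintype.card_prod, DihedralGroup.card, ZMod.card, Fintype.card_multiplicative,
    Fintype.card_bool]
  ring

theorem toLadder_image_neighborSet (p : (DihedralGroup m × Multiplicative (ZMod 2)) × Bool) :
    toLadder m '' (biCayleyGraph _ (ladderR m) (ladderL m) {1}).neighborSet p =
      (multiCrossLadder m).neighborSet (toLadder m p) := by
  obtain ⟨⟨k | k, ε⟩, _ | _⟩ := p <;>
  · simp only [toLadder, biCayleyGraph_neighborSet_false inv_mem_ladderR one_notMem_ladderR,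
      biCayleyGraph_neighborSet_true inv_mem_ladderL one_notMem_ladderL,
      multiCrossLadder_neighborSet_of_even (even_double _),
      multiCrossLadder_neighborSet_of_not_even (not_even_double_add_one _)]
    ext
    simp only [toLadder, ladderR_eq, ladderL_eq, Set.image_insert_eq, Set.image_singleton,
      Set.union_singleton, Set.mem_insert_iff, Set.mem_singleton_iff, Prod.mk_mul_mk, sr_mul_r,
      sr_mul_sr, zero_add, sub_zero, one_mul, inv_one, toAdd_mul, toAdd_ofAdd, map_add, map_sub,
      double_one, double_ofNat]
    ring_nf
    reduce_mod_char
    tauto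

end Ladder

/-- MCL_{4m,2} ≅ BiCay(H, {c, ca}, {ca, ca²b}, {1}) over
H = ⟨a,b,c | a^m = b² = c² = 1, ab = ba, cac⁻¹ = a⁻¹, cb = bc⟩ ≅ D_{2m} × Z₂,
with a = (r 1, 1), b = (1, gen), c = (sr 0, 1). -/
theorem stmt13 (m : ℕ) (hm : 2 ≤ m) :
    Nonempty (multiCrossLadder m ≃g
      biCayleyGraph (DihedralGroup m × Multiplicative (ZMod 2))
        {(sr 0, 1), (sr 0, 1) * (r 1, 1)}
        {(sr 0, 1) * (r 1, 1),
          (sr 0, 1) * (r 1, 1) ^ 2 * (1, Multiplicative.ofAdd (1 : ZMod 2))}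
        {1}) := by
  have : NeZero m := ⟨by omega⟩
  exact ⟨(SimpleGraph.Iso.ofImageNeighborSet (Equiv.ofBijective _ toLadder_bijective)
    toLadder_image_neighborSet).symm⟩
end

section
/- Let Γ = BiCay(H, R, L, S) be a bi-Cayley graph, α an automorphism of H of order 2, and suppose R^α = L, L^α = R, and S^α = S⁻¹. Then Γ is isomorphic to a Cayley graph on the group H ⋊ ⟨α⟩, namely Cay(H ⋊ ⟨α⟩, R ∪ αS). -/
/-- The Cayley graph of a group G with connection set S: g ~ h iff h·g⁻¹ ∈ S. -/
def cayleyGraph (G : Type*) [Group G] (S : Set G) : SimpleGraph G :=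
  SimpleGraph.fromRel (fun g h => h * g⁻¹ ∈ S)

/-- If α ∈ Aut(H) has order 2 with R^α = L, L^α = R, S^α = S⁻¹ and
1 ∈ S, then BiCay(H, R, L, S) ≅ Cay(H ⋊ ⟨α⟩, R ∪ αS), where the semidirect product is
taken along the homomorphism φ : Z₂ → Aut(H) sending the generator to α. -/
theorem stmt19 {H : Type*} [Group H] (R L S : Set H) (hR : R⁻¹ = R) (hL : L⁻¹ = L)
    (h1S : (1 : H) ∈ S) (α : H ≃* H) (hα2 : ∀ h, α (α h) = h)
    (hαne : α ≠ MulEquiv.refl H)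
    (hRα : (⇑α) '' R = L) (hLα : (⇑α) '' L = R) (hSα : (⇑α) '' S = S⁻¹)
    (φ : Multiplicative (ZMod 2) →* MulAut H)
    (hφ : φ (Multiplicative.ofAdd 1) = α) :
    Nonempty (biCayleyGraph H R L S ≃g
      cayleyGraph (H ⋊[φ] Multiplicative (ZMod 2))
        ((fun h => SemidirectProduct.inl h) '' R ∪
          (fun s => (⟨α s, Multiplicative.ofAdd 1⟩ :
            H ⋊[φ] Multiplicative (ZMod 2))) '' S)) := by
  classical
  set e : Multiplicative (ZMod 2) := Multiplicative.ofAdd 1 with he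
  have hen : e ≠ 1 := by decide
  have heinv : e⁻¹ = e := by decide
  have hall : ∀ x : Multiplicative (ZMod 2), x = 1 ∨ x = e := by decide
  set T : Set (H ⋊[φ] Multiplicative (ZMod 2)) :=
    ((fun h => SemidirectProduct.inl h) '' R ∪
      (fun s => (⟨α s, Multiplicative.ofAdd 1⟩ :
        H ⋊[φ] Multiplicative (ZMod 2))) '' S) with hT
  -- the underlying bijection
  set f : H × Bool → H ⋊[φ] Multiplicative (ZMod 2) :=
    fun p => if p.2 then ⟨α p.1, e⟩ else ⟨p.1, 1⟩ with hf
  set g : (H ⋊[φ] Multiplicative (ZMod 2)) → H × Bool :=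
    fun x => if x.right = 1 then (x.left, false) else (α x.left, true) with hg
  have hleft : Function.LeftInverse g f := by
    rintro ⟨h, b⟩
    cases b <;> simp [hf, hg, hen, hα2]
  have hright : Function.RightInverse g f := by
    intro x
    rcases hall x.right with h1 | h1
    · simp [hf, hg, h1]
      exact SemidirectProduct.ext rfl h1.symm
    · rw [hg]
      simp only [h1, hen, if_neg hen]
      simp only [hf, if_pos]
      exact SemidirectProduct.ext (hα2 _) h1.symm
  set E : H × Bool ≃ (H ⋊[φ] Multiplicative (ZMod 2)) := ⟨f, g, hleft, hright⟩ with hE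
  -- membership in T
  have memT : ∀ (x : H) (b : Multiplicative (ZMod 2)),
      (⟨x, b⟩ : H ⋊[φ] Multiplicative (ZMod 2)) ∈ T ↔
        (b = 1 ∧ x ∈ R) ∨ (b = e ∧ x ∈ (⇑α) '' S) := by
    intro x b
    constructor
    · rintro (⟨r, hr, hrx⟩ | ⟨s, hs, hsx⟩)
      · left
        have h1 : r = x := congrArg SemidirectProduct.left hrx
        have h2 : (1 : Multiplicative (ZMod 2)) = b := congrArg SemidirectProduct.right hrx
        exact ⟨h2.symm, h1 ▸ hr⟩
      · right
        have h1 : α s = x := congrArg SemidirectProduct.left hsx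
        have h2 : Multiplicative.ofAdd (1 : ZMod 2) = b := congrArg SemidirectProduct.right hsx
        exact ⟨h2.symm, ⟨s, hs, h1⟩⟩
    · rintro (⟨hb, hx⟩ | ⟨hb, s, hs, hsx⟩)
      · exact Or.inl ⟨x, hx, by subst hb; rfl⟩
      · exact Or.inr ⟨s, hs, by subst hb hsx; rfl⟩
  -- product formula
  have hmul : ∀ (x y : H) (a b : Multiplicative (ZMod 2)),
      (⟨x, a⟩ : H ⋊[φ] Multiplicative (ZMod 2)) * (⟨y, b⟩ : _)⁻¹ =
        ⟨x * φ (a * b⁻¹) y⁻¹, a * b⁻¹⟩ := by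
    intro x y a b
    refine SemidirectProduct.ext ?_ rfl
    simp [SemidirectProduct.mul_left, SemidirectProduct.inv_left,
      SemidirectProduct.inv_right, map_mul]
  have hφ1 : ∀ y : H, φ 1 y = y := by intro y; rw [map_one]; rfl
  have hφe : ∀ y : H, φ e y = α y := by intro y; rw [he, hφ]
  -- cases of the product membership
  have case00 : ∀ x y : H,
      ((⟨x, 1⟩ : H ⋊[φ] Multiplicative (ZMod 2)) * (⟨y, 1⟩ : _)⁻¹ ∈ T) ↔ x * y⁻¹ ∈ R := by
    intro x y
    rw [hmul, memT]
    simp [hφ1, hen.symm, hen]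
  have case11 : ∀ x y : H,
      ((⟨α x, e⟩ : H ⋊[φ] Multiplicative (ZMod 2)) * (⟨α y, e⟩ : _)⁻¹ ∈ T) ↔ x * y⁻¹ ∈ L := by
    intro x y
    rw [hmul, memT]
    rw [heinv]
    have h2 : e * e = 1 := by decide
    rw [h2]
    simp only [hφ1, hen.symm, hen, true_and, false_and, or_false, and_false]
    have hαR : ∀ z : H, α z ∈ R ↔ z ∈ L := by
      intro z
      constructor
      · intro hz
        rcases (hLα ▸ hz : α z ∈ (⇑α) '' L) with ⟨l, hl, hlx⟩
        rwa [← α.injective hlx]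
      · intro hz
        exact hLα ▸ ⟨z, hz, rfl⟩
    rw [← map_inv, ← map_mul, hαR]
  have case01 : ∀ x y : H,
      ((⟨α x, e⟩ : H ⋊[φ] Multiplicative (ZMod 2)) * (⟨y, 1⟩ : _)⁻¹ ∈ T) ↔ x * y⁻¹ ∈ S := by
    intro x y
    rw [hmul, memT]
    simp only [inv_one, mul_one, hφe, hen, false_and, false_or, true_and]
    constructor
    · rintro ⟨s, hs, hsx⟩
      have : α x * α y⁻¹ = α (x * y⁻¹) := by rw [map_mul]
      rw [this] at hsx
      have := α.injective hsx
      rwa [← this]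
    · intro h
      exact ⟨x * y⁻¹, h, by rw [map_mul, map_inv]⟩
  have case10 : ∀ x y : H,
      ((⟨x, 1⟩ : H ⋊[φ] Multiplicative (ZMod 2)) * (⟨α y, e⟩ : _)⁻¹ ∈ T) ↔ y * x⁻¹ ∈ S := by
    intro x y
    rw [hmul, memT]
    rw [heinv, one_mul]
    simp only [hφe, hen, false_and, false_or, true_and]
    constructor
    · rintro ⟨s, hs, hsx⟩
      have h3 : x * α (α y)⁻¹ = x * y⁻¹ := by rw [map_inv, hα2]
      rw [h3] at hsx
      have hmem : x * y⁻¹ ∈ (⇑α) '' S := ⟨s, hs, hsx⟩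
      rw [hSα] at hmem
      have : (x * y⁻¹)⁻¹ ∈ S := hmem
      rwa [mul_inv_rev, inv_inv] at this
    · intro h
      have : (x * y⁻¹)⁻¹ ∈ S := by rwa [mul_inv_rev, inv_inv]
      have hmem : x * y⁻¹ ∈ S⁻¹ := this
      rw [← hSα] at hmem
      rcases hmem with ⟨s, hs, hsx⟩
      refine ⟨s, hs, ?_⟩
      rw [map_inv, hα2]
      exact hsx
  refine ⟨⟨E, ?_⟩⟩
  intro p q
  rw [biCayleyGraph, cayleyGraph, SimpleGraph.fromRel_adj, SimpleGraph.fromRel_adj]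
  have hne : E p ≠ E q ↔ p ≠ q := E.injective.ne_iff
  rw [hne]
  refine and_congr_right fun hpq => ?_
  obtain ⟨x, bx⟩ := p
  obtain ⟨y, by'⟩ := q
  cases bx <;> cases by' <;>
    simp only [hE, hf, Equiv.coe_fn_mk, if_true, if_false, Bool.ite_eq_true_distrib] <;>
    simp only [Bool.false_eq_true, Bool.true_eq_false, false_and, and_false, true_and,
      false_or, or_false, if_false, if_true]
  · rw [case00, case00]
  · rw [case10, case01]
    tauto
  · rw [case01, case10]
    tauto
  · rw [case11, case11]
end
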